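/- arXiv:1003.3262 — 3 statements merged into one kernel-verified Lean document; each statement's English description precedes it below -/
import Mathlib

section
/- If n ≥ 2 and p₁,…,p_r are integers with 0 < pᵢ < n, n divides p₁+⋯+p_r, and gcd(n,p₁,…,p_r)=1, then the quantity σ = (1/2)(2 + (r-2)n - Σᵢ gcd(n,pᵢ)) is a nonnegative integer (i.e., 2 + (r-2)n - Σᵢ gcd(n,pᵢ) is even and nonnegative when r ≥ 3). -/
/-!
Mod 2, `gcd(n, p) ≡ n + p + n p` (it is odd iff `n` or `p` is), so
`∑ gcd(n, pᵢ) ≡ r n + (n + 1) ∑ pᵢ ≡ r n`, because `n ∣ ∑ pᵢ` and `n (n + 1)` is even.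

Each `dᵢ = gcd(n, pᵢ)` is a proper divisor of `n`, so `2 dᵢ ≤ n`, which settles `r ≥ 4`.
For `r = 3` write `n = dᵢ aᵢ`: then `∑ dᵢ = n (1/a₁ + 1/a₂ + 1/a₃)` exceeds `n` only for the
spherical triples `(2, 2, c)`, `(2, 3, 3)`, `(2, 3, 4)`, `(2, 3, 5)`, and there
`gcd(d₁, d₂, d₃) = 1` forces `d₃ ∣ 2`, resp. `n = 6, 12, 30`.
-/

open Finset

theorem Int.even_gcd_iff {m n : ℤ} : Even (Int.gcd m n) ↔ Even m ∧ Even n := by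
  simp only [even_iff_two_dvd, ← Int.natCast_dvd_natCast, Nat.cast_ofNat]
  exact ⟨fun h => ⟨h.trans (Int.gcd_dvd_left m n), h.trans (Int.gcd_dvd_right m n)⟩,
    fun h => Int.dvd_coe_gcd h.1 h.2⟩

theorem Int.natCast_gcd_zmod_two (m n : ℤ) : (Int.gcd m n : ZMod 2) = m + n + m * n := by
  rcases Nat.even_or_odd (Int.gcd m n) with hg | hg
  · obtain ⟨hm, hn⟩ := Int.even_gcd_iff.mp hg
    rw [ZMod.natCast_eq_zero_iff_even.mpr hg, ZMod.intCast_eq_zero_iff_even.mpr hm,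
      ZMod.intCast_eq_zero_iff_even.mpr hn]
    ring
  · have hmn : Odd m ∨ Odd n := by
      simpa only [← Nat.not_even_iff_odd, Int.even_gcd_iff, ← Int.not_even_iff_odd,
        not_and_or] using hg
    rw [ZMod.natCast_eq_one_iff_odd.mpr hg]
    rcases hmn with h | h <;> rw [ZMod.intCast_eq_one_iff_odd.mpr h] <;>
      generalize ((_ : ℤ) : ZMod 2) = x <;> revert x <;> decide

theorem even_two_add_mul_sub_sum_gcd {ι : Type*} (s : Finset ι) (n : ℤ) (p : ι → ℤ)
    (h : n ∣ ∑ i ∈ s, p i) :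
    Even (2 + ((#s : ℤ) - 2) * n - ∑ i ∈ s, (Int.gcd n (p i) : ℤ)) := by
  obtain ⟨k, hk⟩ := h
  have hsq : (n : ZMod 2) ^ 2 = n := ZMod.pow_card _
  have htwo : (2 : ZMod 2) = 0 := rfl
  rw [← ZMod.intCast_eq_zero_iff_even]
  push_cast
  simp only [Int.natCast_gcd_zmod_two, sum_add_distrib, ← mul_sum, sum_const, nsmul_eq_mul]
  rw [← Int.cast_sum, hk]
  push_cast
  linear_combination (-k : ZMod 2) * hsq + (1 - n - n * k : ZMod 2) * htwo

theorem Nat.two_mul_le_of_dvd_of_lt {d n : ℕ} (h : d ∣ n) (hlt : d < n) : 2 * d ≤ n := by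
  by_contra! h2
  exact hlt.ne' (Nat.eq_of_dvd_of_lt_two_mul (by omega) h h2)

/-- `1/a + 1/b + 1/c > 1` with `2 ≤ a ≤ b ≤ c`: the spherical triangle groups. -/
theorem Nat.spherical_triple_cases {a b c : ℕ} (ha : 2 ≤ a) (hab : a ≤ b) (hbc : b ≤ c)
    (h : a * b * c < b * c + a * c + a * b) : a = 2 ∧ (b = 2 ∨ b = 3 ∧ c ≤ 5) := by
  obtain rfl : a = 2 := by
    by_contra
    have h3 : 3 * (b * c) ≤ a * (b * c) := Nat.mul_le_mul_right _ (by omega)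
    nlinarith [Nat.mul_le_mul_right c hab, Nat.mul_le_mul_left a hbc]
  obtain rfl | rfl | hb : b = 2 ∨ b = 3 ∨ 4 ≤ b := by omega
  · simp
  · omega
  · nlinarith

theorem Nat.add_add_le_add_two_of_dvd {n d₁ d₂ d₃ : ℕ} (h₁ : d₁ ∣ n) (h₂ : d₂ ∣ n) (h₃ : d₃ ∣ n)
    (l₁ : d₁ < n) (l₂ : d₂ < n) (l₃ : d₃ < n)
    (hg : ∀ k, k ∣ d₁ → k ∣ d₂ → k ∣ d₃ → k = 1) :
    d₁ + d₂ + d₃ ≤ n + 2 := by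
  wlog h21 : d₂ ≤ d₁ generalizing d₁ d₂
  · have := this h₂ h₁ l₂ l₁ (fun k k₂ k₁ k₃ => hg k k₁ k₂ k₃) (by omega)
    omega
  wlog h31 : d₃ ≤ d₁ generalizing d₁ d₂ d₃
  · have := this h₁ l₁ h₃ h₂ l₃ l₂ (fun k k₃ k₂ k₁ => hg k k₁ k₂ k₃) (by omega) (by omega)
    omega
  wlog h32 : d₃ ≤ d₂ generalizing d₂ d₃
  · have := this h₂ l₂ h₃ l₃ (fun k k₁ k₃ k₂ => hg k k₁ k₂ k₃) h31 h21 (by omega)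
    omega
  obtain ⟨a₁, he₁⟩ := h₁
  obtain ⟨a₂, he₂⟩ := h₂
  obtain ⟨a₃, he₃⟩ := h₃
  have hd₃ : 0 < d₃ := Nat.pos_of_ne_zero (by rintro rfl; omega)
  have ha₁ : 2 ≤ a₁ := by nlinarith
  have ha₁₂ : a₁ ≤ a₂ := by nlinarith
  have ha₂₃ : a₂ ≤ a₃ := by nlinarith
  by_cases hsph : a₂ * a₃ + a₁ * a₃ + a₁ * a₂ ≤ a₁ * a₂ * a₃
  · have : (d₁ + d₂ + d₃) * (a₁ * a₂ * a₃) ≤ n * (a₁ * a₂ * a₃) :=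
      calc (d₁ + d₂ + d₃) * (a₁ * a₂ * a₃)
          = d₁ * a₁ * (a₂ * a₃) + d₂ * a₂ * (a₁ * a₃) + d₃ * a₃ * (a₁ * a₂) := by ring
        _ = n * (a₂ * a₃ + a₁ * a₃ + a₁ * a₂) := by rw [← he₁, ← he₂, ← he₃]; ring
        _ ≤ n * (a₁ * a₂ * a₃) := Nat.mul_le_mul_left n hsph
    have := Nat.le_of_mul_le_mul_right this
      (Nat.mul_pos (Nat.mul_pos (by omega) (by omega)) (by omega))
    omega
  obtain ⟨rfl, rfl | ⟨rfl, ha₃⟩⟩ := Nat.spherical_triple_cases ha₁ ha₁₂ ha₂₃ (by omega)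
  · obtain rfl : d₁ = d₂ := by omega
    have hcop : Nat.Coprime d₃ d₁ :=
      hg _ (Nat.gcd_dvd_right _ _) (Nat.gcd_dvd_right _ _) (Nat.gcd_dvd_left _ _)
    have : d₃ ∣ 2 := hcop.dvd_of_dvd_mul_left (he₁ ▸ Dvd.intro a₃ he₃.symm)
    have := Nat.le_of_dvd two_pos this
    omega
  · interval_cases a₃
    · obtain ⟨m, rfl⟩ : 6 ∣ n := by omega
      have := hg m ⟨3, by omega⟩ ⟨2, by omega⟩ ⟨2, by omega⟩
      omega
    · obtain ⟨m, rfl⟩ : 12 ∣ n := by omega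
      have := hg m ⟨6, by omega⟩ ⟨4, by omega⟩ ⟨3, by omega⟩
      omega
    · obtain ⟨m, rfl⟩ : 30 ∣ n := by omega
      have := hg m ⟨15, by omega⟩ ⟨10, by omega⟩ ⟨6, by omega⟩
      omega

/-- The genus formula for a cyclic n-gonal curve yields a nonnegative integer:
`2 + (r-2)n - Σ gcd(n,pᵢ)` is even, and nonnegative when `r ≥ 3`. -/
theorem cyclic_ngonal_genus_integral
    (n : ℤ) (r : ℕ) (p : Fin r → ℤ)
    (hn : 2 ≤ n)
    (hp : ∀ i, 0 < p i ∧ p i < n)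
    (hdvd : n ∣ ∑ i, p i)
    (hgcd : Finset.univ.gcd (fun i => Int.gcd n (p i)) = 1) :
    Even (2 + ((r : ℤ) - 2) * n - ∑ i, (Int.gcd n (p i) : ℤ)) ∧
      (3 ≤ r → 0 ≤ 2 + ((r : ℤ) - 2) * n - ∑ i, (Int.gcd n (p i) : ℤ)) := by
  refine ⟨by simpa only [card_univ, Fintype.card_fin] using
    even_two_add_mul_sub_sum_gcd univ n p hdvd, fun hr => ?_⟩
  have hlt : ∀ i, Int.gcd n (p i) < n.natAbs := fun i => by
    have := Int.le_of_dvd (hp i).1 (Int.gcd_dvd_right n (p i))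
    have := (hp i).2
    omega
  obtain rfl | hr₄ : r = 3 ∨ 4 ≤ r := by omega
  · have := Nat.add_add_le_add_two_of_dvd (Int.gcd_dvd_natAbs_left n (p 0))
      (Int.gcd_dvd_natAbs_left n (p 1)) (Int.gcd_dvd_natAbs_left n (p 2)) (hlt 0) (hlt 1) (hlt 2)
      fun k h₀ h₁ h₂ => Nat.dvd_one.mp <| hgcd ▸ dvd_gcd fun i _ => by fin_cases i <;> assumption
    rw [Fin.sum_univ_three]
    omega
  · have hsum : 2 * ∑ i, (Int.gcd n (p i) : ℤ) ≤ r * n := calc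
      _ = ∑ i, 2 * (Int.gcd n (p i) : ℤ) := mul_sum ..
      _ ≤ ∑ _i : Fin r, n := sum_le_sum fun i _ => by
        have := Nat.two_mul_le_of_dvd_of_lt (Int.gcd_dvd_natAbs_left n (p i)) (hlt i)
        omega
      _ = r * n := by simp
    nlinarith
end

section
/- Let N = C₂ ⋉ (C_k × C_k) with the generator y of C₂ acting by (z₁,z₂) ↦ (z₁,z₂⁻¹), and let e ≥ 1 be coprime to 2k; set G = C_e × N. Let x generate C_e and z₁, z₂ generate the two C_k factors. Then (y, y·x·z₁·z₂, (x·z₁·z₂)⁻¹) is a generating vector: the product of the three elements is the identity, y has order 2, y·x·z₁·z₂ has order 2ek (when e,k odd coprime), and the three elements generate G. -/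
/-! `y·x·z₁·z₂ = x · z₁ · (y·z₂)` is a product of pairwise commuting elements of the pairwise
coprime orders `e`, `k` and `2`, so it has order `2ek` and each factor is a power of it.
Its powers thus give `x`, `z₁` and `y·z₂`, and together with `y` these generate `G`. -/

section

variable {G : Type*} [Group G]

theorem Commute.mem_zpowers_mul_of_coprime {g h : G} (hc : Commute g h)
    (hco : (orderOf g).Coprime (orderOf h)) : g ∈ Subgroup.zpowers (g * h) := by
  obtain ⟨m, hm⟩ := exists_pow_eq_self_of_coprime hco.symm
  have hpow : (g * h) ^ orderOf h = g ^ orderOf h := by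
    rw [hc.mul_pow, pow_orderOf_eq_one, mul_one]
  have hmem := Subgroup.npow_mem_zpowers (g * h) (orderOf h * m)
  rwa [pow_mul, hpow, hm] at hmem

theorem orderOf_mul_eq_two_of_conj_eq_inv {y z : G} (hy : orderOf y = 2)
    (hz : Odd (orderOf z)) (hyz : y * z * y⁻¹ = z⁻¹) : orderOf (y * z) = 2 := by
  have hyinv : y⁻¹ = y := by
    rw [inv_eq_iff_mul_eq_one, ← pow_two, ← hy, pow_orderOf_eq_one]
  refine orderOf_eq_prime ?_ fun hyz1 => ?_
  · rw [pow_two, ← mul_assoc]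
    nth_rw 2 [← hyinv]
    rw [hyz, inv_mul_cancel]
  · rw [mul_eq_one_iff_eq_inv.mp hyz1, orderOf_inv] at hy
    exact Nat.not_even_iff_odd.mpr hz (hy ▸ even_two)

end

theorem fermat_type_generating_vector_general {G : Type*} [Group G]
    (e k : ℕ) (he : Odd e) (hk : Odd k) (hek : Nat.Coprime e k)
    (x y z₁ z₂ : G)
    (hx : orderOf x = e) (hy : orderOf y = 2)
    (hz₁ : orderOf z₁ = k) (hz₂ : orderOf z₂ = k)
    (hxc : ∀ g : G, x * g = g * x)
    (hz : z₁ * z₂ = z₂ * z₁)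
    (hyz₁ : y * z₁ = z₁ * y)
    (hyz₂ : y * z₂ * y⁻¹ = z₂⁻¹)
    (hgen : Subgroup.closure {x, y, z₁, z₂} = (⊤ : Subgroup G)) :
    y * (y * x * z₁ * z₂) * (x * z₁ * z₂)⁻¹ = 1 ∧
      orderOf (y * x * z₁ * z₂) = 2 * e * k ∧
      Subgroup.closure {y, y * x * z₁ * z₂, (x * z₁ * z₂)⁻¹} = (⊤ : Subgroup G) := by
  have hyz₂_ord : orderOf (y * z₂) = 2 := orderOf_mul_eq_two_of_conj_eq_inv hy (hz₂ ▸ hk) hyz₂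
  have hw : y * x * z₁ * z₂ = x * (z₁ * (y * z₂)) := by
    rw [← hxc y, mul_assoc x y z₁, hyz₁]; group
  have hz₁_comm : Commute z₁ (y * z₂) := (Commute.symm hyz₁).mul_right hz
  have hx_comm : Commute x (z₁ * (y * z₂)) := hxc _
  have hco₁ : (orderOf z₁).Coprime (orderOf (y * z₂)) := by
    rw [hz₁, hyz₂_ord]; exact Nat.coprime_two_right.mpr hk
  have hz₁_ord : orderOf (z₁ * (y * z₂)) = k * 2 := by
    rw [hz₁_comm.orderOf_mul_eq_mul_orderOf_of_coprime hco₁, hz₁, hyz₂_ord]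
  have hco₂ : (orderOf x).Coprime (orderOf (z₁ * (y * z₂))) := by
    rw [hx, hz₁_ord]; exact hek.mul_right (Nat.coprime_two_right.mpr he)
  refine ⟨?_, ?_, ?_⟩
  · rw [mul_inv_eq_one]
    simp only [← mul_assoc, ← pow_two, ← hy, pow_orderOf_eq_one, one_mul]
  · rw [hw, hx_comm.orderOf_mul_eq_mul_orderOf_of_coprime hco₂, hx, hz₁_ord]; ring
  · set H := Subgroup.closure {y, y * x * z₁ * z₂, (x * z₁ * z₂)⁻¹}
    have hyH : y ∈ H := Subgroup.subset_closure (by simp)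
    have hwH : x * (z₁ * (y * z₂)) ∈ H := hw ▸ Subgroup.subset_closure (by simp)
    have hxH : x ∈ H := Subgroup.zpowers_le.mpr hwH (hx_comm.mem_zpowers_mul_of_coprime hco₂)
    have hz₁yz₂H : z₁ * (y * z₂) ∈ H := by simpa using H.mul_mem (H.inv_mem hxH) hwH
    have hz₁H : z₁ ∈ H :=
      Subgroup.zpowers_le.mpr hz₁yz₂H (hz₁_comm.mem_zpowers_mul_of_coprime hco₁)
    have hz₂H : z₂ ∈ H := by
      simpa using H.mul_mem (H.inv_mem hyH) (H.mul_mem (H.inv_mem hz₁H) hz₁yz₂H)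
    rw [eq_top_iff, ← hgen, Subgroup.closure_le]
    rintro g (rfl | rfl | rfl | rfl) <;> assumption

/-- In `G ≅ C_e × (C₂ ⋉ (C_k × C_k))` (with the involution inverting the second
`C_k` factor), for `e, k` odd and coprime, the triple
`(y, y·x·z₁·z₂, (x·z₁·z₂)⁻¹)` is a generating `(2, 2ek, ek)`-vector. -/
theorem fermat_type_generating_vector {G : Type*} [Group G]
    (e k : ℕ) (he : Odd e) (hk : Odd k) (hek : Nat.Coprime e k)
    (he1 : 1 ≤ e) (hk1 : 2 ≤ k)
    (x y z₁ z₂ : G)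
    (hx : orderOf x = e) (hy : orderOf y = 2)
    (hz₁ : orderOf z₁ = k) (hz₂ : orderOf z₂ = k)
    (hxc : ∀ g : G, x * g = g * x)
    (hz : z₁ * z₂ = z₂ * z₁)
    (hyz₁ : y * z₁ = z₁ * y)
    (hyz₂ : y * z₂ * y⁻¹ = z₂⁻¹)
    (hgen : Subgroup.closure {x, y, z₁, z₂} = (⊤ : Subgroup G))
    (hcard : Nat.card G = 2 * e * k ^ 2) :
    y * (y * x * z₁ * z₂) * (x * z₁ * z₂)⁻¹ = 1 ∧
      orderOf (y * x * z₁ * z₂) = 2 * e * k ∧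
      Subgroup.closure {y, y * x * z₁ * z₂, (x * z₁ * z₂)⁻¹} = (⊤ : Subgroup G) :=
  fermat_type_generating_vector_general e k he hk hek x y z₁ z₂ hx hy hz₁ hz₂ hxc hz hyz₁ hyz₂ hgen
end

section
/- Let n ≥ 1 and consider the group G = S₃ ⋉ (ℤ/n)², where the transposition (1,2) acts by (a,b) ↦ (b,a), (1,3) acts by (a,b) ↦ (-a, -a+b), and (2,3) acts by (a,b) ↦ (a-b, -b). Then the subgroup C = {(1,(0,a)) : a ∈ ℤ/n} is weakly malnormal in G: the normalizer of C in G contains ⟨(1,3)⟩ ⋉ (ℤ/n)², and for every g ∈ G outside the normalizer of C, C ∩ gCg⁻¹ is trivial. -/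
/-- For the Fermat-curve automorphism group `G = S₃ ⋉ (ℤ/n)²` (with the
transpositions acting by `(1,2):(a,b)↦(b,a)`, `(1,3):(a,b)↦(-a,-a+b)`,
`(2,3):(a,b)↦(a-b,-b)`), the `n`-gonal subgroup `C = {(0,a)}` has normalizer
containing `⟨(1,3)⟩ ⋉ (ℤ/n)²`, and is weakly malnormal in `G`. -/
theorem fermat_ngonal_weakly_malnormal (n : ℕ) (hn : 1 ≤ n)
    (φ : Equiv.Perm (Fin 3) →* MulAut (Multiplicative (ZMod n × ZMod n)))
    (h12 : ∀ a b : ZMod n,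
      φ (Equiv.swap 0 1) (Multiplicative.ofAdd (a, b)) = Multiplicative.ofAdd (b, a))
    (h13 : ∀ a b : ZMod n,
      φ (Equiv.swap 0 2) (Multiplicative.ofAdd (a, b)) =
        Multiplicative.ofAdd (-a, -a + b))
    (h23 : ∀ a b : ZMod n,
      φ (Equiv.swap 1 2) (Multiplicative.ofAdd (a, b)) =
        Multiplicative.ofAdd (a - b, -b)) :
    let C : Subgroup (Multiplicative (ZMod n × ZMod n) ⋊[φ] Equiv.Perm (Fin 3)) :=
      Subgroup.closure
        {g | ∃ a : ZMod n, g = SemidirectProduct.inl (Multiplicative.ofAdd (0, a))}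
    Subgroup.closure
        ({SemidirectProduct.inr (Equiv.swap 0 2)} ∪
          {g | ∃ a b : ZMod n,
            g = SemidirectProduct.inl (Multiplicative.ofAdd (a, b))}) ≤
        Subgroup.normalizer (C : Set (Multiplicative (ZMod n × ZMod n) ⋊[φ] Equiv.Perm (Fin 3))) ∧
      ∀ g, g ∉ Subgroup.normalizer (C : Set (Multiplicative (ZMod n × ZMod n) ⋊[φ] Equiv.Perm (Fin 3))) → C ⊓ C.map (MulAut.conj g).toMonoidHom = ⊥ := by
  intro C
  have hconj : ∀ (g : Multiplicative (ZMod n × ZMod n) ⋊[φ] Equiv.Perm (Fin 3)) (x : Multiplicative (ZMod n × ZMod n)),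
      g * SemidirectProduct.inl x * g⁻¹ = SemidirectProduct.inl (φ g.right x) := by
    intro g x
    refine SemidirectProduct.ext ?_ ?_
    · simp [SemidirectProduct.mul_left, SemidirectProduct.inv_left,
        SemidirectProduct.mul_right, map_mul, map_inv, mul_comm, mul_left_comm, mul_assoc]
    · simp [SemidirectProduct.mul_right, SemidirectProduct.inv_right]
  have hmemC : ∀ x : Multiplicative (ZMod n × ZMod n) ⋊[φ] Equiv.Perm (Fin 3), x ∈ C ↔
      ∃ a : ZMod n, x = SemidirectProduct.inl (Multiplicative.ofAdd (0, a)) := by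
    intro x
    constructor
    · intro hx
      refine Subgroup.closure_induction (p := fun x _ => ∃ a : ZMod n, x = SemidirectProduct.inl (Multiplicative.ofAdd (0, a))) (fun x hx => hx) ⟨0, by rw [Prod.mk_zero_zero, ofAdd_zero, map_one]⟩ ?_ ?_ hx
      · rintro x y - - ⟨a, rfl⟩ ⟨b, rfl⟩
        exact ⟨a + b, by rw [← map_mul]; simp [← ofAdd_add]⟩
      · rintro x - ⟨a, rfl⟩
        exact ⟨-a, by rw [← map_inv]; simp [← ofAdd_neg]⟩
    · rintro ⟨a, rfl⟩
      exact Subgroup.subset_closure ⟨a, rfl⟩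
  have hfix : ∀ g : Multiplicative (ZMod n × ZMod n) ⋊[φ] Equiv.Perm (Fin 3), (∀ a : ZMod n,
      φ g.right (Multiplicative.ofAdd ((0 : ZMod n), a)) = Multiplicative.ofAdd (0, a)) →
      g ∈ Subgroup.normalizer (C : Set (Multiplicative (ZMod n × ZMod n) ⋊[φ] Equiv.Perm (Fin 3))) := by
    intro g hfg
    have hfg' : ∀ a : ZMod n,
        φ g.right⁻¹ (Multiplicative.ofAdd ((0 : ZMod n), a)) = Multiplicative.ofAdd (0, a) := by
      intro a
      rw [map_inv]
      nth_rewrite 1 [← hfg a]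
      simp
    rw [Subgroup.mem_normalizer_iff]
    intro h
    constructor
    · intro hh
      rcases (hmemC h).1 hh with ⟨a, rfl⟩
      rw [hconj]
      exact (hmemC _).2 ⟨a, by rw [hfg]⟩
    · intro hh
      rcases (hmemC _).1 hh with ⟨a, ha⟩
      have : h = g⁻¹ * SemidirectProduct.inl (Multiplicative.ofAdd (0, a)) * g⁻¹⁻¹ := by
        rw [← ha]; group
      rw [this, hconj]
      exact (hmemC _).2 ⟨a, by rw [SemidirectProduct.inv_right, hfg']⟩
  constructor
  · rw [Subgroup.closure_le]
    rintro g (rfl | ⟨a, b, rfl⟩)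
    · exact hfix _ (fun a => by rw [SemidirectProduct.right_inr, h13]; simp)
    · exact hfix _ (fun a => by rw [SemidirectProduct.right_inl, map_one]; rfl)
  · intro g hg
    have hcases : ∀ σ : Equiv.Perm (Fin 3), σ = 1 ∨ σ = Equiv.swap 0 1 ∨ σ = Equiv.swap 0 2 ∨
        σ = Equiv.swap 1 2 ∨ σ = Equiv.swap 0 1 * Equiv.swap 0 2 ∨
        σ = Equiv.swap 0 2 * Equiv.swap 0 1 := by decide
    have key : ∀ b : ZMod n,
        (Multiplicative.toAdd (φ g.right (Multiplicative.ofAdd ((0 : ZMod n), b)))).1 = b ∨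
        (Multiplicative.toAdd (φ g.right (Multiplicative.ofAdd ((0 : ZMod n), b)))).1 = -b := by
      intro b
      rcases hcases g.right with h | h | h | h | h | h
      · exact absurd (hfix g (fun a => by rw [h, map_one]; rfl)) hg
      · rw [h, h12]; left; rfl
      · exact absurd (hfix g (fun a => by rw [h, h13]; simp)) hg
      · rw [h, h23]; right; simp
      · rw [h, map_mul]
        left
        show (Multiplicative.toAdd ((φ (Equiv.swap 0 1)) ((φ (Equiv.swap 0 2))
          (Multiplicative.ofAdd (0, b))))).1 = b
        rw [h13, h12]
        simp
      · rw [h, map_mul]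
        right
        show (Multiplicative.toAdd ((φ (Equiv.swap 0 2)) ((φ (Equiv.swap 0 1))
          (Multiplicative.ofAdd (0, b))))).1 = -b
        rw [h12, h13]
        simp
    rw [eq_bot_iff]
    rintro x ⟨hx1, hx2⟩
    rcases (hmemC x).1 hx1 with ⟨a, rfl⟩
    rcases hx2 with ⟨y, hy, hyx⟩
    rcases (hmemC y).1 hy with ⟨b, rfl⟩
    rw [MulEquiv.coe_toMonoidHom, MulAut.conj_apply, hconj] at hyx
    have heq := SemidirectProduct.inl_injective hyx
    have h1 : (Multiplicative.toAdd (φ g.right (Multiplicative.ofAdd ((0:ZMod n), b)))).1 = 0 := by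
      rw [heq]; rfl
    have hb : b = 0 := by
      rcases key b with h | h
      · rw [← h, h1]
      · rw [← neg_neg b, ← h, h1, neg_zero]
    subst hb
    have h0 : (Multiplicative.ofAdd ((0 : ZMod n), (0 : ZMod n))) = 1 := by
      rw [Prod.mk_zero_zero, ofAdd_zero]
    have ha1 : Multiplicative.ofAdd ((0 : ZMod n), a) = 1 := by
      rw [← heq, h0, map_one]
    have ha : a = 0 := by
      have := congrArg Multiplicative.toAdd ha1
      simpa [Prod.ext_iff] using this
    subst ha
    rw [Subgroup.mem_bot, h0, map_one]
end
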